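/- Let ℬ be a doubling ball-basis. Then for any f ∈ L¹_loc(X, 𝕌) and balls A ⊂ B one has ‖f_A − f_B‖_𝕌 ≤ C log(1 + μ(B)/μ(A)) · ⟨f⟩*_{#,A}, where C is an admissible constant, ⟨f⟩_{#,G} = (μ(G)^{−1}∫_G ‖f − f_G‖_𝕌^r)^{1/r}, and ⟨f⟩*_{#,A} = sup_{G ∈ ℬ, G ⊇ A} ⟨f⟩_{#,G}. -/

import Mathlib

open MeasureTheory Set ENNReal NNReal

/-- A ball-basis on a measure space `(X, μ)`: a family of measurable sets of positive
finite measure satisfying conditions B1)-B4) of Karagulyan. -/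
structure BallBasis (X : Type*) [MeasurableSpace X] (μ : Measure X) where
  balls : Set (Set X)
  K : ℝ≥0
  K_pos : 0 < K
  measurableSet : ∀ B ∈ balls, MeasurableSet B
  measure_pos : ∀ B ∈ balls, 0 < μ B
  measure_lt_top : ∀ B ∈ balls, μ B < ∞
  exists_ball : ∀ x y : X, ∃ B ∈ balls, x ∈ B ∧ y ∈ B
  approx : ∀ E : Set X, MeasurableSet E → ∀ ε : ℝ≥0∞, 0 < ε →
      ∃ Bs : ℕ → Set X, (∀ k, Bs k ∈ balls) ∧ μ (symmDiff E (⋃ k, Bs k)) < ε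
  hull : Set X → Set X
  hull_mem : ∀ B ∈ balls, hull B ∈ balls
  star_subset_hull : ∀ B ∈ balls,
      (⋃₀ {A | A ∈ balls ∧ μ A ≤ 2 * μ B ∧ (A ∩ B).Nonempty}) ⊆ hull B
  measure_hull_le : ∀ B ∈ balls, μ (hull B) ≤ (K : ℝ≥0∞) * μ B

namespace BallBasis

variable {X : Type*} [MeasurableSpace X] {μ : Measure X}

/-- `B* = ⋃ {A ∈ ℬ : μ A ≤ 2 μ B, A ∩ B ≠ ∅}`. -/
def star (ℬ : BallBasis X μ) (B : Set X) : Set X :=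
  ⋃₀ {A | A ∈ ℬ.balls ∧ μ A ≤ 2 * μ B ∧ (A ∩ B).Nonempty}

/-- The doubling condition for a ball-basis, with doubling constant `η`. -/
def Doubling (ℬ : BallBasis X μ) (η : ℝ≥0) : Prop :=
  ∀ B ∈ ℬ.balls, ℬ.star B ≠ univ →
    ∃ B' ∈ ℬ.balls, B ⊂ B' ∧ μ B' ≤ (η : ℝ≥0∞) * μ B

end BallBasis

section Sharp

variable {X : Type*} [MeasurableSpace X] {μ : Measure X}
variable {𝕌 : Type*} [NormedAddCommGroup 𝕌] [NormedSpace ℝ 𝕌]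

/-- The average `f_A = μ(A)⁻¹ ∫_A f`. -/
noncomputable def ballAvg (μ : Measure X) (A : Set X) (f : X → 𝕌) : 𝕌 :=
  (μ A).toReal⁻¹ • ∫ x in A, f x ∂μ

/-- The `L^r` mean oscillation `⟨f⟩_{#,B} = (μ(B)⁻¹ ∫_B ‖f - f_B‖^r)^{1/r}`. -/
noncomputable def sharpAvg (μ : Measure X) (r : ℝ) (f : X → 𝕌) (B : Set X) : ℝ≥0∞ :=
  ((∫⁻ x in B, (‖f x - ballAvg μ B f‖₊ : ℝ≥0∞) ^ r ∂μ) / μ B) ^ (1 / r)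

/-- `⟨f⟩*_{#,B} = sup_{A ∈ ℬ, A ⊇ B} ⟨f⟩_{#,A}`. -/
noncomputable def sharpStar {μ : Measure X} (ℬ : BallBasis X μ) (r : ℝ)
    (f : X → 𝕌) (B : Set X) : ℝ≥0∞ :=
  ⨆ A ∈ {A | A ∈ ℬ.balls ∧ B ⊆ A}, sharpAvg μ r f A

/-- The sharp maximal function `𝓜_# f(x) = sup_{B ∋ x} ⟨f⟩_{#,B}`. -/
noncomputable def sharpMax {μ : Measure X} (ℬ : BallBasis X μ) (r : ℝ)
    (f : X → 𝕌) (x : X) : ℝ≥0∞ :=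
  ⨆ B ∈ {B | B ∈ ℬ.balls ∧ x ∈ B}, sharpAvg μ r f B

end Sharp

/-!
By Hölder's inequality, `‖f_G - f_{G'}‖ ≤ (μ G' / μ G) ⟨f⟩_{#,G'}` for `G ⊆ G'`, so it suffices
to join `A` to `B` by a chain of balls `A = G₀ ⊆ G₁ ⊆ ⋯`, each at least twice and at most a
constant times as large as the previous one, until `μ B ≤ 2 μ Gₙ`; then `Gₙ` and `B` both lie in
the hull `[Gₙ]`, of comparable measure. Doubling provides the next ball of the chain (or shows
that the whole space is a ball of comparable measure), and the chain has `O(log (μ B / μ A))`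
links, each costing a constant multiple of `⟨f⟩*_{#,A}`.
-/

namespace BallBasis

variable {X : Type*} [MeasurableSpace X] {μ : Measure X} (ℬ : BallBasis X μ)

theorem subset_hull {A B : Set X} (hA : A ∈ ℬ.balls) (hB : B ∈ ℬ.balls)
    (hAB : μ A ≤ 2 * μ B) (hne : (A ∩ B).Nonempty) : A ⊆ ℬ.hull B :=
  (subset_sUnion_of_mem (show A ∈ {A' | A' ∈ ℬ.balls ∧ μ A' ≤ 2 * μ B ∧ (A' ∩ B).Nonempty}
    from ⟨hA, hAB, hne⟩)).trans (ℬ.star_subset_hull B hB)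

theorem self_subset_hull {B : Set X} (hB : B ∈ ℬ.balls) : B ⊆ ℬ.hull B :=
  ℬ.subset_hull hB hB (le_mul_of_one_le_left zero_le one_le_two)
    (by rw [inter_self]; exact nonempty_of_measure_ne_zero (ℬ.measure_pos B hB).ne')

theorem one_le_K {B : Set X} (hB : B ∈ ℬ.balls) : 1 ≤ ℬ.K := by
  have h : 1 * μ B ≤ ℬ.K * μ B := by
    rw [one_mul]
    exact (measure_mono (ℬ.self_subset_hull hB)).trans (ℬ.measure_hull_le B hB)
  exact_mod_cast (ENNReal.mul_le_mul_iff_left (ℬ.measure_pos B hB).ne'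
    (ℬ.measure_lt_top B hB).ne).1 h

def Expanding (c : ℝ≥0) : Prop :=
  ∀ G ∈ ℬ.balls, (univ ∈ ℬ.balls ∧ μ univ ≤ 2 * ℬ.K * μ G) ∨
    ∃ G' ∈ ℬ.balls, G ⊆ G' ∧ 2 * μ G ≤ μ G' ∧ μ G' ≤ c * μ G

variable {ℬ}

/-- If `[G]` is less than twice as large as `G`, then either `[G]* = X`, so that `[[G]] = X`,
or doubling yields a ball strictly larger than `[G]`; it has measure `≥ 2 μ G`, since otherwise
it would lie in `G* ⊆ [G]`. -/
theorem Doubling.expanding {η : ℝ≥0} (hd : ℬ.Doubling η) : ℬ.Expanding (ℬ.K + 2 * η) := by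
  intro G hG
  have hH := ℬ.hull_mem G hG
  have hGH := ℬ.self_subset_hull hG
  have hHG := ℬ.measure_hull_le G hG
  rcases le_or_gt (2 * μ G) (μ (ℬ.hull G)) with h2 | h2
  · refine Or.inr ⟨ℬ.hull G, hH, hGH, h2, hHG.trans ?_⟩
    gcongr
    exact_mod_cast le_self_add
  by_cases hstar : ℬ.star (ℬ.hull G) = univ
  · have huniv : ℬ.hull (ℬ.hull G) = univ :=
      eq_univ_of_univ_subset (hstar ▸ ℬ.star_subset_hull _ hH)
    refine Or.inl ⟨huniv ▸ ℬ.hull_mem _ hH, ?_⟩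
    calc μ univ = μ (ℬ.hull (ℬ.hull G)) := by rw [huniv]
      _ ≤ ℬ.K * μ (ℬ.hull G) := ℬ.measure_hull_le _ hH
      _ ≤ ℬ.K * (2 * μ G) := by gcongr
      _ = 2 * ℬ.K * μ G := by ring
  obtain ⟨G', hG', hHG', hG'H⟩ := hd _ hH hstar
  have hGG' : G ⊆ G' := hGH.trans hHG'.subset
  refine Or.inr ⟨G', hG', hGG', ?_, ?_⟩
  · by_contra! hlt
    have hne : (G' ∩ G).Nonempty := by
      rw [inter_eq_right.2 hGG']; exact nonempty_of_measure_ne_zero (ℬ.measure_pos G hG).ne'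
    exact hHG'.not_subset (ℬ.subset_hull hG' hG hlt.le hne)
  · calc μ G' ≤ η * μ (ℬ.hull G) := hG'H
      _ ≤ η * (2 * μ G) := by gcongr
      _ = (2 * η : ℝ≥0) * μ G := by push_cast; ring
      _ ≤ (ℬ.K + 2 * η : ℝ≥0) * μ G := by gcongr; exact_mod_cast le_add_self

end BallBasis

section Oscillation

variable {X : Type*} [MeasurableSpace X] {μ : Measure X}
variable {𝕌 : Type*} [NormedAddCommGroup 𝕌] [NormedSpace ℝ 𝕌]

theorem enorm_ballAvg_le {G : Set X} (g : X → 𝕌) :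
    ‖ballAvg μ G g‖ₑ ≤ (μ G)⁻¹ * ∫⁻ x in G, ‖g x‖ₑ ∂μ := by
  rw [ballAvg, enorm_smul, ← ENNReal.toReal_inv, Real.enorm_eq_ofReal ENNReal.toReal_nonneg]
  gcongr
  · exact ENNReal.ofReal_toReal_le
  · exact enorm_integral_le_lintegral_enorm _

theorem ballAvg_sub_const [CompleteSpace 𝕌] {f : X → 𝕌} {G : Set X} (c : 𝕌)
    (h0 : μ G ≠ 0) (hfin : μ G ≠ ∞) (hf : IntegrableOn f G μ) :
    ballAvg μ G (fun x => f x - c) = ballAvg μ G f - c := by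
  have htr : (μ G).toReal ≠ 0 := ENNReal.toReal_ne_zero.2 ⟨h0, hfin⟩
  rw [ballAvg, ballAvg, integral_sub hf (integrableOn_const hfin), setIntegral_const,
    measureReal_def, smul_sub, smul_smul, inv_mul_cancel₀ htr, one_smul]

theorem setLIntegral_enorm_sub_ballAvg_le {r : ℝ} (hr : 1 ≤ r) {f : X → 𝕌} {G : Set X}
    (h0 : μ G ≠ 0) (hfin : μ G ≠ ∞) (hf : AEStronglyMeasurable f (μ.restrict G)) :
    ∫⁻ x in G, ‖f x - ballAvg μ G f‖ₑ ∂μ ≤ μ G * sharpAvg μ r f G := by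
  have hr0 : (0 : ℝ) < r := zero_lt_one.trans_le hr
  have hLp := eLpNorm_le_eLpNorm_mul_rpow_measure_univ (p := 1) (q := ENNReal.ofReal r)
    (f := fun x => f x - ballAvg μ G f)
    (by simpa using hr) (hf.sub aestronglyMeasurable_const)
  rw [eLpNorm_one_eq_lintegral_enorm, eLpNorm_eq_lintegral_rpow_enorm_toReal (by simpa using hr0)
    ENNReal.ofReal_ne_top, Measure.restrict_apply_univ, ENNReal.toReal_ofReal hr0.le,
    ENNReal.toReal_one] at hLp
  refine hLp.trans_eq ?_
  simp only [sharpAvg, ← enorm_eq_nnnorm]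
  rw [ENNReal.div_rpow_of_nonneg _ _ (by positivity), one_div_one, ENNReal.rpow_sub _ _ h0 hfin,
    ENNReal.rpow_one, ENNReal.div_eq_inv_mul, ENNReal.div_eq_inv_mul]
  ring

theorem enorm_ballAvg_sub_ballAvg_le [CompleteSpace 𝕌] {r : ℝ} (hr : 1 ≤ r) {f : X → 𝕌}
    {G G' : Set X} (hGG' : G ⊆ G') (h0 : μ G ≠ 0) (hfin' : μ G' ≠ ∞)
    (hf : IntegrableOn f G' μ) :
    ‖ballAvg μ G f - ballAvg μ G' f‖ₑ ≤ μ G' / μ G * sharpAvg μ r f G' := by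
  have h0' : μ G' ≠ 0 := fun h => h0 (measure_mono_null hGG' h)
  calc ‖ballAvg μ G f - ballAvg μ G' f‖ₑ
      = ‖ballAvg μ G (fun x => f x - ballAvg μ G' f)‖ₑ := by
        rw [ballAvg_sub_const _ h0 (ne_top_of_le_ne_top hfin' (measure_mono hGG'))
          (hf.mono_set hGG')]
    _ ≤ (μ G)⁻¹ * ∫⁻ x in G, ‖f x - ballAvg μ G' f‖ₑ ∂μ := enorm_ballAvg_le _
    _ ≤ (μ G)⁻¹ * ∫⁻ x in G', ‖f x - ballAvg μ G' f‖ₑ ∂μ := by gcongr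
    _ ≤ (μ G)⁻¹ * (μ G' * sharpAvg μ r f G') := by
        gcongr; exact setLIntegral_enorm_sub_ballAvg_le hr h0' hfin' hf.aestronglyMeasurable
    _ = μ G' / μ G * sharpAvg μ r f G' := by rw [ENNReal.div_eq_inv_mul, mul_assoc]

end Oscillation

section SharpStar

variable {X : Type*} [MeasurableSpace X] {μ : Measure X} {ℬ : BallBasis X μ}
variable {𝕌 : Type*} [NormedAddCommGroup 𝕌] [NormedSpace ℝ 𝕌]

theorem sharpAvg_le_sharpStar {r : ℝ} {f : X → 𝕌} {A G : Set X} (hG : G ∈ ℬ.balls)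
    (hAG : A ⊆ G) : sharpAvg μ r f G ≤ sharpStar ℬ r f A :=
  le_biSup (fun G => sharpAvg μ r f G) (show G ∈ {G | G ∈ ℬ.balls ∧ A ⊆ G} from ⟨hG, hAG⟩)

variable [CompleteSpace 𝕌] {r : ℝ} {f : X → 𝕌}

theorem enorm_ballAvg_sub_ballAvg_le_sharpStar (hr : 1 ≤ r) {A G H : Set X} (hH : H ∈ ℬ.balls)
    (hAH : A ⊆ H) (hGH : G ⊆ H) (h0 : μ G ≠ 0) (hf : IntegrableOn f H μ) {t : ℝ≥0∞}
    (ht : μ H ≤ t * μ G) :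
    ‖ballAvg μ G f - ballAvg μ H f‖ₑ ≤ t * sharpStar ℬ r f A :=
  (enorm_ballAvg_sub_ballAvg_le hr hGH h0 (ℬ.measure_lt_top H hH).ne hf).trans <|
    mul_le_mul' (ENNReal.div_le_of_le_mul ht) (sharpAvg_le_sharpStar hH hAH)

theorem enorm_ballAvg_sub_ballAvg_le_sharpStar_of_superball (hr : 1 ≤ r) {A G B H : Set X}
    (hH : H ∈ ℬ.balls) (hAH : A ⊆ H) (hGH : G ⊆ H) (hBH : B ⊆ H) (hG0 : μ G ≠ 0)
    (hB0 : μ B ≠ 0) (hf : IntegrableOn f H μ) {s t : ℝ≥0∞} (hs : μ H ≤ s * μ G)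
    (ht : μ H ≤ t * μ B) :
    ‖ballAvg μ G f - ballAvg μ B f‖ₑ ≤ (s + t) * sharpStar ℬ r f A := by
  rw [← edist_eq_enorm_sub, add_mul]
  refine (edist_triangle_right _ _ (ballAvg μ H f)).trans (add_le_add ?_ ?_) <;>
    rw [edist_eq_enorm_sub]
  · exact enorm_ballAvg_sub_ballAvg_le_sharpStar hr hH hAH hGH hG0 hf hs
  · exact enorm_ballAvg_sub_ballAvg_le_sharpStar hr hH hAH hBH hB0 hf ht

theorem enorm_ballAvg_sub_ballAvg_le_of_le_two_mul (hr : 1 ≤ r)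
    (hf : ∀ G ∈ ℬ.balls, IntegrableOn f G μ) {A B G : Set X} (hA : A ∈ ℬ.balls)
    (hB : B ∈ ℬ.balls) (hG : G ∈ ℬ.balls) (hAB : A ⊆ B) (hAG : A ⊆ G) {t : ℝ≥0∞}
    (hGB : μ G ≤ t * μ B) (hBG : μ B ≤ 2 * μ G) :
    ‖ballAvg μ G f - ballAvg μ B f‖ₑ ≤ (ℬ.K + ℬ.K * t) * sharpStar ℬ r f A := by
  have hH := ℬ.hull_mem G hG
  have hGH := ℬ.self_subset_hull hG
  have hBG_ne : (B ∩ G).Nonempty :=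
    (nonempty_of_measure_ne_zero (ℬ.measure_pos A hA).ne').mono (subset_inter hAB hAG)
  have hHB : μ (ℬ.hull G) ≤ ℬ.K * t * μ B :=
    calc μ (ℬ.hull G) ≤ ℬ.K * μ G := ℬ.measure_hull_le G hG
      _ ≤ ℬ.K * (t * μ B) := by gcongr
      _ = ℬ.K * t * μ B := by ring
  exact enorm_ballAvg_sub_ballAvg_le_sharpStar_of_superball hr hH (hAG.trans hGH) hGH
    (ℬ.subset_hull hB hG hBG hBG_ne) (ℬ.measure_pos G hG).ne' (ℬ.measure_pos B hB).ne' (hf _ hH)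
    (ℬ.measure_hull_le G hG) hHB

theorem enorm_ballAvg_sub_ballAvg_le_of_univ_mem (hr : 1 ≤ r) (hU : univ ∈ ℬ.balls)
    (hfU : IntegrableOn f univ μ) {A B G : Set X} (hB : B ∈ ℬ.balls) (hG : G ∈ ℬ.balls)
    (hUG : μ univ ≤ 2 * ℬ.K * μ G) (hGB : 2 * μ G ≤ μ B) :
    ‖ballAvg μ G f - ballAvg μ B f‖ₑ ≤ 3 * ℬ.K * sharpStar ℬ r f A := by
  have hUB : μ univ ≤ ℬ.K * μ B :=
    calc μ univ ≤ 2 * ℬ.K * μ G := hUG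
      _ = ℬ.K * (2 * μ G) := by ring
      _ ≤ ℬ.K * μ B := by gcongr
  convert enorm_ballAvg_sub_ballAvg_le_sharpStar_of_superball hr hU (subset_univ A)
    (subset_univ G) (subset_univ B) (ℬ.measure_pos G hG).ne' (ℬ.measure_pos B hB).ne' hfU hUG hUB
    using 2
  ring

theorem enorm_ballAvg_sub_ballAvg_le_of_expanding {c : ℝ≥0} (hc : ℬ.Expanding c) (hc1 : 1 ≤ c)
    (hr : 1 ≤ r) (hf : ∀ G ∈ ℬ.balls, IntegrableOn f G μ) {A B : Set X} (hA : A ∈ ℬ.balls)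
    (hB : B ∈ ℬ.balls) (hAB : A ⊆ B) (n : ℕ) {G : Set X} (hG : G ∈ ℬ.balls) (hAG : A ⊆ G)
    (hGB : μ G ≤ c * μ B) (hBG : μ B ≤ 2 ^ n * μ G) :
    ‖ballAvg μ G f - ballAvg μ B f‖ₑ ≤ 3 * ℬ.K * c * (n + 1) * sharpStar ℬ r f A := by
  have hK : (1 : ℝ) ≤ ℬ.K := ℬ.one_le_K hA
  have hc1' : (1 : ℝ) ≤ c := hc1
  have le_const : ∀ {x : ℝ≥0}, (x : ℝ) ≤ 3 * ℬ.K * c → ∀ m : ℕ,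
      (x : ℝ≥0∞) ≤ 3 * ℬ.K * c * (m + 1) := fun hx m =>
    le_mul_of_le_of_one_le (by exact_mod_cast hx) le_add_self
  induction n generalizing G with
  | zero =>
    rcases le_or_gt (μ B) (2 * μ G) with h2 | h2
    · refine (enorm_ballAvg_sub_ballAvg_le_of_le_two_mul hr hf hA hB hG hAB hAG hGB h2).trans ?_
      gcongr ?_ * _
      exact_mod_cast le_const (x := ℬ.K + ℬ.K * c) (by push_cast; nlinarith) 0
    · rw [pow_zero, one_mul] at hBG
      exact absurd (h2.trans_le hBG) (not_lt.2 (le_mul_of_one_le_left zero_le one_le_two))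
  | succ n ih =>
    rcases le_or_gt (μ B) (2 * μ G) with h2 | h2
    · refine (enorm_ballAvg_sub_ballAvg_le_of_le_two_mul hr hf hA hB hG hAB hAG hGB h2).trans ?_
      gcongr ?_ * _
      exact_mod_cast le_const (x := ℬ.K + ℬ.K * c) (by push_cast; nlinarith) _
    rcases hc G hG with ⟨hU, hUG⟩ | ⟨G', hG', hGG', h2G', hG'G⟩
    · refine (enorm_ballAvg_sub_ballAvg_le_of_univ_mem (A := A) hr hU (hf _ hU) hB hG hUG
        h2.le).trans ?_
      gcongr ?_ * _
      exact_mod_cast le_const (x := 3 * ℬ.K) (by push_cast; nlinarith) _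
    have hGB' : μ G ≤ μ B := (le_mul_of_one_le_left zero_le one_le_two).trans h2.le
    have hBG' : μ B ≤ 2 ^ n * μ G' :=
      calc μ B ≤ 2 ^ (n + 1) * μ G := hBG
        _ = 2 ^ n * (2 * μ G) := by ring
        _ ≤ 2 ^ n * μ G' := by gcongr
    calc ‖ballAvg μ G f - ballAvg μ B f‖ₑ
        ≤ ‖ballAvg μ G f - ballAvg μ G' f‖ₑ + ‖ballAvg μ G' f - ballAvg μ B f‖ₑ := by
          simp only [← edist_eq_enorm_sub]; exact edist_triangle _ _ _
      _ ≤ c * sharpStar ℬ r f A + 3 * ℬ.K * c * (n + 1) * sharpStar ℬ r f A :=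
          add_le_add (enorm_ballAvg_sub_ballAvg_le_sharpStar hr hG' (hAG.trans hGG') hGG'
            (ℬ.measure_pos G hG).ne' (hf _ hG') hG'G)
            (ih hG' (hAG.trans hGG') (hG'G.trans (mul_le_mul_right hGB' _)) hBG')
      _ ≤ 3 * ℬ.K * c * sharpStar ℬ r f A + 3 * ℬ.K * c * (n + 1) * sharpStar ℬ r f A := by
          gcongr
          exact_mod_cast (by nlinarith : (c : ℝ) ≤ 3 * ℬ.K * c)
      _ = 3 * ℬ.K * c * ((n + 1 : ℕ) + 1) * sharpStar ℬ r f A := by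
          push_cast; ring

end SharpStar

theorem exists_two_pow_le_toReal_div {a b : ℝ≥0∞} (ha0 : a ≠ 0) (ha : a ≠ ∞)
    (hb : b ≠ ∞) (hab : a ≤ b) : ∃ n : ℕ, 2 ^ n ≤ b.toReal / a.toReal ∧ b ≤ 2 ^ (n + 1) * a := by
  have ha' : 0 < a.toReal := ENNReal.toReal_pos ha0 ha
  obtain ⟨n, hn, hn'⟩ := exists_nat_pow_near
    ((one_le_div ha').2 (ENNReal.toReal_mono hb hab)) one_lt_two
  refine ⟨n, hn, ?_⟩
  rw [← ENNReal.toReal_le_toReal hb (by finiteness)]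
  simpa using ((div_lt_iff₀ ha').1 hn').le

theorem natCast_add_two_le_mul_log {n : ℕ} {t : ℝ} (h : 2 ^ n ≤ t) :
    (n : ℝ) + 2 ≤ 3 / Real.log 2 * Real.log (1 + t) := by
  have hlog2 : 0 < Real.log 2 := Real.log_pos one_lt_two
  have ht : 1 ≤ t := (one_le_pow₀ one_le_two).trans h
  have h2 : Real.log 2 ≤ Real.log (1 + t) := Real.log_le_log two_pos (by linarith)
  have hn : n * Real.log 2 ≤ Real.log (1 + t) := by
    rw [← Real.log_pow]; exact Real.log_le_log (by positivity) (by linarith)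
  rw [div_mul_eq_mul_div, le_div_iff₀ hlog2]
  linarith

theorem enorm_ballAvg_sub_ballAvg_le_log_of_expanding {X : Type*} [MeasurableSpace X]
    {μ : Measure X} {ℬ : BallBasis X μ} {𝕌 : Type*} [NormedAddCommGroup 𝕌] [NormedSpace ℝ 𝕌]
    [CompleteSpace 𝕌] {c : ℝ≥0} (hc : ℬ.Expanding c) (hc1 : 1 ≤ c) {r : ℝ} (hr : 1 ≤ r)
    {f : X → 𝕌} (hf : ∀ G ∈ ℬ.balls, IntegrableOn f G μ) {A B : Set X} (hA : A ∈ ℬ.balls)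
    (hB : B ∈ ℬ.balls) (hAB : A ⊆ B) :
    ‖ballAvg μ A f - ballAvg μ B f‖ₑ ≤ 3 * ℬ.K * c *
      ENNReal.ofReal (3 / Real.log 2 * Real.log (1 + (μ B).toReal / (μ A).toReal)) *
        sharpStar ℬ r f A := by
  obtain ⟨n, hn, hBA⟩ := exists_two_pow_le_toReal_div (ℬ.measure_pos A hA).ne'
    (ℬ.measure_lt_top A hA).ne (ℬ.measure_lt_top B hB).ne (measure_mono hAB)
  have hAB' : μ A ≤ c * μ B :=
    (measure_mono hAB).trans (le_mul_of_one_le_left zero_le (by exact_mod_cast hc1))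
  refine (enorm_ballAvg_sub_ballAvg_le_of_expanding hc hc1 hr hf hA hB hAB (n + 1) hA subset_rfl
    hAB' hBA).trans ?_
  gcongr ?_ * _
  calc 3 * ℬ.K * c * (((n + 1 : ℕ) : ℝ≥0∞) + 1) = 3 * ℬ.K * c * ENNReal.ofReal (n + 2) := by
        rw [ENNReal.ofReal_add (by positivity) zero_le_two, ENNReal.ofReal_natCast,
          ENNReal.ofReal_ofNat]; push_cast; ring
    _ ≤ _ := by gcongr; exact natCast_add_two_le_mul_log hn

theorem norm_ballAvg_sub_le_log_general {X : Type*} [MeasurableSpace X] {μ : Measure X}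
    (ℬ : BallBasis X μ) {𝕌 : Type*} [NormedAddCommGroup 𝕌] [NormedSpace ℝ 𝕌]
    [CompleteSpace 𝕌] {η : ℝ≥0} (hd : ℬ.Doubling η)
    (r : ℝ) (hr : 1 ≤ r) :
    ∃ C : ℝ≥0, 0 < C ∧ ∀ f : X → 𝕌, (∀ G ∈ ℬ.balls, IntegrableOn f G μ) →
      ∀ A ∈ ℬ.balls, ∀ B ∈ ℬ.balls, A ⊆ B →
        (‖ballAvg μ A f - ballAvg μ B f‖₊ : ℝ≥0∞) ≤
          (C : ℝ≥0∞) * ENNReal.ofReal (Real.log (1 + (μ B).toReal / (μ A).toReal)) *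
            sharpStar ℬ r f A := by
  refine ⟨3 * ℬ.K * (ℬ.K + 2 * η) * (3 / Real.log 2).toNNReal, by have := ℬ.K_pos; positivity,
    fun f hf A hA B hB hAB => ?_⟩
  have h := enorm_ballAvg_sub_ballAvg_le_log_of_expanding hd.expanding
    ((ℬ.one_le_K hA).trans le_self_add) hr hf hA hB hAB
  rw [ENNReal.ofReal_mul (by positivity), ← mul_assoc] at h
  exact_mod_cast h

/-- For a doubling ball-basis and balls `A ⊆ B`:
`‖f_A - f_B‖ ≤ C log(1 + μ(B)/μ(A)) ⟨f⟩*_{#,A}`. -/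
theorem norm_ballAvg_sub_le_log {X : Type*} [MeasurableSpace X] {μ : Measure X}
    (ℬ : BallBasis X μ) {𝕌 : Type*} [NormedAddCommGroup 𝕌] [NormedSpace ℝ 𝕌]
    [CompleteSpace 𝕌] {η : ℝ≥0} (hη : 1 < η) (hd : ℬ.Doubling η)
    (r : ℝ) (hr : 1 ≤ r) :
    ∃ C : ℝ≥0, 0 < C ∧ ∀ f : X → 𝕌, (∀ G ∈ ℬ.balls, IntegrableOn f G μ) →
      ∀ A ∈ ℬ.balls, ∀ B ∈ ℬ.balls, A ⊆ B →
        (‖ballAvg μ A f - ballAvg μ B f‖₊ : ℝ≥0∞) ≤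
          (C : ℝ≥0∞) * ENNReal.ofReal (Real.log (1 + (μ B).toReal / (μ A).toReal)) *
            sharpStar ℬ r f A :=
  norm_ballAvg_sub_le_log_general ℬ hd r hr
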